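/- arXiv:2012.12828 — 3 statements merged into one kernel-verified Lean document; each statement's English description precedes it below -/
import Mathlib

section
/- Let (M,g) be a Riemannian 3-manifold with volume form μ, and let X be a nowhere-vanishing vector field on M satisfying curl X = fX for a smooth positive function f (equivalently, dα = f ι_X μ where α = g(X,·)). Then α ∧ dα > 0 everywhere, i.e., α is a contact form on M. -/
open scoped RealInnerProductSpace

noncomputable section

/-- Model of the tangent space of a Riemannian 3-manifold at a point (with the
metric identified with the Euclidean one in an orthonormal frame). -/
abbrev V3 := EuclideanSpace ℝ (Fin 3)

/-- Wedge product of a 1-form with a 2-form, with forms represented as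
functions of vectors. -/
def w13 (a : V3 → ℝ) (b : V3 → V3 → ℝ) : V3 → V3 → V3 → ℝ :=
  fun u v w => a u * b v w - a v * b u w + a w * b u v

/-- Interior product of a vector with a 3-form. -/
def iota3 (X : V3) (m : V3 → V3 → V3 → ℝ) : V3 → V3 → ℝ :=
  fun v w => m X v w

/-- The Riemannian volume 3-form (the determinant in an orthonormal frame). -/
def vol3 : V3 → V3 → V3 → ℝ := fun u v w =>
  u 0 * (v 1 * w 2 - v 2 * w 1) - u 1 * (v 0 * w 2 - v 2 * w 0)
    + u 2 * (v 0 * w 1 - v 1 * w 0)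

theorem w13_const_mul_right (a : V3 → ℝ) (b : V3 → V3 → ℝ) (c : ℝ) :
    w13 a (fun v w => c * b v w) = fun u v w => c * w13 a b u v w := by
  funext u v w
  simp only [w13]
  ring

/-- Since `α ∧ μ` is a 4-form on a 3-dimensional space, `0 = ι_X (α ∧ μ) = α(X) μ - α ∧ ι_X μ`. -/
theorem w13_inner_iota3_vol3 (X : V3) :
    w13 (fun v => ⟪X, v⟫) (iota3 X vol3) = fun u v w => ⟪X, X⟫ * vol3 u v w := by
  funext u v w
  simp only [w13, iota3, vol3, PiLp.inner_apply, RCLike.inner_apply, conj_trivial,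
    Fin.sum_univ_three]
  ring

/-- If `X` is nowhere vanishing, `α = g(X,·)` its metric-dual
1-form and `dα = f ι_X μ` with `f > 0`, then `α ∧ dα = (f g(X,X)) μ > 0`
everywhere, i.e. `α` is a contact form. -/
theorem stmt0 {M : Type*} (X : M → V3) (f : M → ℝ)
    (hX : ∀ x, X x ≠ 0) (hf : ∀ x, 0 < f x)
    (α : M → V3 → ℝ) (hα : ∀ x v, α x v = ⟪X x, v⟫)
    (dα : M → V3 → V3 → ℝ)
    (hdα : ∀ x, dα x = fun v w => f x * iota3 (X x) vol3 v w) :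
    ∀ x, (w13 (α x) (dα x) = fun u v w => (f x * ⟪X x, X x⟫) * vol3 u v w)
      ∧ 0 < f x * ⟪X x, X x⟫ := by
  intro x
  have hαx : α x = fun v => ⟪X x, v⟫ := funext (hα x)
  refine ⟨?_, mul_pos (hf x) (real_inner_self_pos.2 (hX x))⟩
  rw [hαx, hdα x, w13_const_mul_right, w13_inner_iota3_vol3]
  funext u v w
  ring
end
end

section
/- Let T = (Q, q₀, q_halt, Σ, δ) be a Turing machine with global transition function Δ : (Q \ {q_halt}) × Σ^ℤ → Q × Σ^ℤ. Define the generalized shift φ on A^ℤ, A = Σ ∪ Q, by the maps F, G depending on positions {−1,0,1} as in Moore's construction, and define the injective encoding map ψ : Q × Σ^ℤ → A^ℤ by ψ(q,(t_i)) = (…t_{−1}.q t₀ t₁…) (state symbol placed at position 0, tape symbol t_i placed at position i+1 for i ≥ 0 and position i for i < 0). Then Δ = ψ⁻¹ ∘ φ ∘ ψ on the domain of Δ. -/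
section TMdefs
variable {Q Λ : Type*}

/-- One step of a Turing machine with transition function components
`F₁ : Q × Σ → Q`, `F₂ : Q × Σ → Σ`, `F₃ : Q × Σ → {−1,0,1} ⊆ ℤ`:
replace the state by `F₁(q,t₀)`, the scanned symbol `t₀` by `F₂(q,t₀)` and
shift the tape by `F₃(q,t₀)` (`1` = left shift, `−1` = right shift).
This is the global transition function `Δ` on `Q × Σ^ℤ`. -/
def tmStep (F1 : Q → Λ → Q) (F2 : Q → Λ → Λ) (F3 : Q → Λ → ℤ) :
    Q × (ℤ → Λ) → Q × (ℤ → Λ) := fun c =>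
  (F1 c.1 (c.2 0),
    fun n => Function.update c.2 0 (F2 c.1 (c.2 0)) (n + F3 c.1 (c.2 0)))

/-- The encoding `ψ : Q × Σ^ℤ → A^ℤ`, `A = Σ ⊔ Q`: the state symbol is placed
at position `0`, the tape symbol `t_i` at position `i+1` for `i ≥ 0` and at
position `i` for `i < 0`. -/
def encode (q : Q) (t : ℤ → Λ) : ℤ → Q ⊕ Λ := fun n =>
  if n = 0 then Sum.inl q else if 0 < n then Sum.inr (t (n - 1)) else Sum.inr (t n)

/-- Moore's map `F` of the generalized shift, depending on the symbols at
positions `−1, 0, 1`. -/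
def mooreF (F3 : Q → Λ → ℤ) : (Q ⊕ Λ) × (Q ⊕ Λ) × (Q ⊕ Λ) → ℤ
  | (Sum.inr _, Sum.inl q, Sum.inr a) => F3 q a
  | _ => 0

/-- Moore's map `G` of the generalized shift, modifying the symbols at
positions `−1, 0, 1`. -/
def mooreG (F1 : Q → Λ → Q) (F2 : Q → Λ → Λ) (F3 : Q → Λ → ℤ) :
    (Q ⊕ Λ) × (Q ⊕ Λ) × (Q ⊕ Λ) → (Q ⊕ Λ) × (Q ⊕ Λ) × (Q ⊕ Λ)
  | (Sum.inr b, Sum.inl q, Sum.inr a) =>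
      if F3 q a = 1 then (Sum.inr b, Sum.inr (F2 q a), Sum.inl (F1 q a))
      else if F3 q a = -1 then (Sum.inl (F1 q a), Sum.inr b, Sum.inr (F2 q a))
      else (Sum.inr b, Sum.inl (F1 q a), Sum.inr (F2 q a))
  | x => x

/-- The generalized shift with `D_F = D_G = {−1,0,1}` determined by maps
`F : A³ → ℤ` and `G : A³ → A³`: first modify the symbols at positions
`−1, 0, 1` by `G`, then shift the whole sequence by `F`. -/
def gshift {A : Type*} (F : A × A × A → ℤ) (G : A × A × A → A × A × A)
    (s : ℤ → A) : ℤ → A :=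
  let a := (s (-1), s 0, s 1)
  let s' : ℤ → A := fun n =>
    if n = -1 then (G a).1 else if n = 0 then (G a).2.1
    else if n = 1 then (G a).2.2 else s n
  fun n => s' (n + F a)

end TMdefs

/-!
Off the window `{-1, 0, 1}` the generalized shift only translates by `d = F₃(q, t₀) ∈ {-1, 0, 1}`,
and translating the encoding `ψ(q, t)` by `d` gives `ψ` of the translated tape there, because the
state slot at `0` stays inside the window. On the window, Moore's `G` writes precisely the new
state and scanned symbol at the positions that the translation then carries to `ψ(Δ(q, t))`.
-/

section GeneralizedShift
variable {A : Type*}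

theorem gshift_eq_of_window {F : A × A × A → ℤ} {G : A × A × A → A × A × A} {s r : ℤ → A} {d : ℤ}
    (hF : F (s (-1), s 0, s 1) = d)
    (hG : G (s (-1), s 0, s 1) = (r (-1 - d), r (0 - d), r (1 - d)))
    (hs : ∀ m, m ≠ -1 → m ≠ 0 → m ≠ 1 → s m = r (m - d)) :
    gshift F G s = r := by
  funext n
  simp only [gshift, hF, hG]
  split_ifs with h₁ h₀ h₂
  · rw [← h₁, add_sub_cancel_right]
  · rw [← h₀, add_sub_cancel_right]
  · rw [← h₂, add_sub_cancel_right]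
  · rw [hs _ h₁ h₀ h₂, add_sub_cancel_right]

end GeneralizedShift

section Encoding
variable {Q Λ : Type*}

@[simp]
theorem encode_zero (q : Q) (t : ℤ → Λ) : encode q t 0 = Sum.inl q := rfl

theorem encode_add_one_of_nonneg (q : Q) (t : ℤ → Λ) {n : ℤ} (hn : 0 ≤ n) :
    encode q t (n + 1) = Sum.inr (t n) := by
  simp [encode, show n + 1 ≠ 0 by omega, show 0 < n + 1 by omega]

theorem encode_of_neg (q : Q) (t : ℤ → Λ) {n : ℤ} (hn : n < 0) :
    encode q t n = Sum.inr (t n) := by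
  simp [encode, hn.ne, hn.not_gt]

theorem encode_injective :
    Function.Injective (fun c : Q × (ℤ → Λ) => encode c.1 c.2) := by
  rintro ⟨q, t⟩ ⟨q', t'⟩ h
  have hq : q = q' := by simpa using congrFun h 0
  have ht : t = t' := by
    funext n
    rcases le_or_gt 0 n with hn | hn
    · simpa [encode_add_one_of_nonneg _ _ hn] using congrFun h (n + 1)
    · simpa [encode_of_neg _ _ hn] using congrFun h n
  rw [hq, ht]

end Encoding

section Moore
variable {Q Λ : Type*} (F1 : Q → Λ → Q) (F2 : Q → Λ → Λ) (F3 : Q → Λ → ℤ)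

theorem mooreF_encode_window (q : Q) (t : ℤ → Λ) :
    mooreF F3 (encode q t (-1), encode q t 0, encode q t 1) = F3 q (t 0) := rfl

theorem mooreG_encode_window (q : Q) (t : ℤ → Λ)
    (h3 : F3 q (t 0) = 1 ∨ F3 q (t 0) = 0 ∨ F3 q (t 0) = -1) :
    let r := encode (tmStep F1 F2 F3 (q, t)).1 (tmStep F1 F2 F3 (q, t)).2
    let d := F3 q (t 0)
    mooreG F1 F2 F3 (encode q t (-1), encode q t 0, encode q t 1) =
      (r (-1 - d), r (0 - d), r (1 - d)) := by
  rcases h3 with h | h | h <;> simp [mooreG, encode, tmStep, h]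

theorem encode_tmStep_of_off_window (q : Q) (t : ℤ → Λ)
    (h3 : F3 q (t 0) = 1 ∨ F3 q (t 0) = 0 ∨ F3 q (t 0) = -1)
    (m : ℤ) (hm₁ : m ≠ -1) (hm₀ : m ≠ 0) (hm₂ : m ≠ 1) :
    encode q t m =
      encode (tmStep F1 F2 F3 (q, t)).1 (tmStep F1 F2 F3 (q, t)).2 (m - F3 q (t 0)) := by
  have hd : -1 ≤ F3 q (t 0) ∧ F3 q (t 0) ≤ 1 := by omega
  rcases le_or_gt 0 m with hm | hm
  · obtain ⟨k, rfl⟩ : ∃ k, m = k + 1 := ⟨m - 1, by ring⟩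
    rw [encode_add_one_of_nonneg _ _ (by omega),
      show k + 1 - F3 q (t 0) = k - F3 q (t 0) + 1 by ring, encode_add_one_of_nonneg _ _ (by omega)]
    simp [tmStep, Function.update_of_ne (show k ≠ 0 by omega)]
  · rw [encode_of_neg _ _ (by omega), encode_of_neg _ _ (by omega)]
    simp [tmStep, Function.update_of_ne (show m ≠ 0 by omega)]

end Moore

/-- (Moore's conjugation lemma.) The encoding `ψ` is injective
and conjugates the global transition function `Δ` of the Turing machine with
Moore's generalized shift `φ` on its domain: `ψ ∘ Δ = φ ∘ ψ`, i.e.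
`Δ = ψ⁻¹ ∘ φ ∘ ψ` on `(Q \ {q_halt}) × Σ^ℤ`. -/
theorem stmt5 {Q Λ : Type*} (F1 : Q → Λ → Q) (F2 : Q → Λ → Λ) (F3 : Q → Λ → ℤ)
    (q_halt : Q) (h3 : ∀ q a, F3 q a = 1 ∨ F3 q a = 0 ∨ F3 q a = -1) :
    Function.Injective (fun c : Q × (ℤ → Λ) => encode c.1 c.2) ∧
    ∀ (q : Q) (t : ℤ → Λ), q ≠ q_halt →
      gshift (mooreF F3) (mooreG F1 F2 F3) (encode q t)
        = encode (tmStep F1 F2 F3 (q, t)).1 (tmStep F1 F2 F3 (q, t)).2 := by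
  refine ⟨encode_injective, fun q t _ => ?_⟩
  exact gshift_eq_of_window (mooreF_encode_window F3 q t)
    (mooreG_encode_window F1 F2 F3 q t (h3 q (t 0)))
    (encode_tmStep_of_off_window F1 F2 F3 q t (h3 q (t 0)))
end

section
/- An injective generalized shift φ : A^ℤ → A^ℤ (A finite) whose defining maps F, G have finite domains is surjective, hence bijective. -/
/-!
On the cylinder of configurations showing the pattern `w` on `S`, the generalized shift is a
bijection onto the set `C w` of configurations whose values at `S - k w` are prescribed
(`k w` being the shift amount on that cylinder). Injectivity makes the `|A| ^ |S|` sets `C w`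
pairwise disjoint. Seen through a finite window `T` containing every `S - k w`, each `C w`
has `|A| ^ (|T| - |S|)` elements, so together they exhaust `A ^ T`: every configuration lies in
some `C w` and hence in the image.
-/

open Finset Function

theorem card_filter_forall_imp_eq_mul_pow {α A : Type*} [Fintype α] [DecidableEq α] [Fintype A]
    [DecidableEq A] (p : α → Prop) [DecidablePred p] (c : α → A) :
    #{x : α → A | ∀ a, p a → x a = c a} * Fintype.card A ^ Fintype.card {a // p a} =
      Fintype.card A ^ Fintype.card α := by
  have hext : {x : α → A // ∀ a, p a → x a = c a} ≃ ({a // ¬p a} → A) :=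
    (Equiv.subtypeEquivRight fun x => by simp [funext_iff]).trans
      (Equiv.subtypePreimage p fun a => c a)
  rw [← Fintype.card_subtype, Fintype.card_congr hext, Fintype.card_fun, ← pow_add,
    ← Fintype.card_sum, Fintype.card_congr ((Equiv.sumComm _ _).trans (Equiv.sumCompl p))]

theorem Finset.exists_mem_of_pairwise_disjoint_of_card_mul {ι β : Type*} [Fintype ι] [Nonempty ι]
    [Fintype β] [DecidableEq β] (E : ι → Finset β) (hE : Pairwise (Disjoint on E))
    (hcard : ∀ i, #(E i) * Fintype.card ι = Fintype.card β) (b : β) : ∃ i, b ∈ E i := by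
  have hcover : univ.biUnion E = univ := by
    refine eq_univ_of_card _ ?_
    rw [card_biUnion fun i _ j _ hij => hE hij]
    refine Nat.eq_of_mul_eq_mul_right (Fintype.card_pos (α := ι)) ?_
    rw [sum_mul, sum_congr rfl fun i _ => hcard i, sum_const, card_univ, smul_eq_mul, mul_comm]
  simpa using (hcover ▸ mem_univ b : b ∈ univ.biUnion E)

section Overwrite

variable {Γ A : Type*} [DecidableEq Γ]

def overwrite (S : Finset Γ) (w : S → A) (s : Γ → A) : Γ → A :=
  fun n => if h : n ∈ S then w ⟨n, h⟩ else s n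

@[simp]
theorem overwrite_of_mem {S : Finset Γ} (w : S → A) (s : Γ → A) {n : Γ} (hn : n ∈ S) :
    overwrite S w s n = w ⟨n, hn⟩ :=
  dif_pos hn

@[simp]
theorem overwrite_of_notMem {S : Finset Γ} (w : S → A) (s : Γ → A) {n : Γ} (hn : n ∉ S) :
    overwrite S w s n = s n :=
  dif_neg hn

@[simp]
theorem restrict_overwrite (S : Finset Γ) (w : S → A) (s : Γ → A) :
    S.restrict (overwrite S w s) = w := by
  funext i
  simp [Finset.restrict]

end Overwrite

section GeneralizedShift

variable {Γ A : Type*} [AddGroup Γ] [DecidableEq Γ]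

def genShift (F : (Γ → A) → Γ) (G : (Γ → A) → Γ → A) (s : Γ → A) : Γ → A :=
  fun n => G s (n + F s)

structure IsGenShiftData (S : Finset Γ) (F : (Γ → A) → Γ) (G : (Γ → A) → Γ → A) :
    Prop where
  F_congr : ∀ s s', (∀ i ∈ S, s i = s' i) → F s = F s'
  G_congr : ∀ s s', (∀ i ∈ S, s i = s' i) → ∀ i ∈ S, G s i = G s' i
  G_of_notMem : ∀ s, ∀ i ∉ S, G s i = s i

def shiftedCylinder (S : Finset Γ) (k : Γ) (g : Γ → A) : Set (Γ → A) :=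
  {t | ∀ i ∈ S, t (i - k) = g i}

variable {S : Finset Γ} {F : (Γ → A) → Γ} {G : (Γ → A) → Γ → A}

theorem genShift_overwrite_eq (h : IsGenShiftData S F G) (w : S → A) (s₀ t : Γ → A)
    (ht : t ∈ shiftedCylinder S (F (overwrite S w s₀)) (G (overwrite S w s₀))) :
    genShift F G (overwrite S w fun n => t (n - F (overwrite S w s₀))) = t := by
  set k := F (overwrite S w s₀)
  have hS : ∀ i ∈ S, overwrite S w (fun n => t (n - k)) i = overwrite S w s₀ i := by
    intro i hi
    simp [hi]
  funext n
  rw [genShift, h.F_congr _ _ hS]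
  by_cases hn : n + k ∈ S
  · rw [h.G_congr _ _ hS _ hn, ← ht _ hn, add_sub_cancel_right]
  · rw [h.G_of_notMem _ _ hn, overwrite_of_notMem _ _ hn, add_sub_cancel_right]

theorem eq_of_mem_shiftedCylinder (h : IsGenShiftData S F G) (hinj : Injective (genShift F G))
    {w w' : S → A} {s₀ t : Γ → A}
    (hw : t ∈ shiftedCylinder S (F (overwrite S w s₀)) (G (overwrite S w s₀)))
    (hw' : t ∈ shiftedCylinder S (F (overwrite S w' s₀)) (G (overwrite S w' s₀))) :
    w = w' := by
  have hpre := hinj <|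
    (genShift_overwrite_eq h w s₀ t hw).trans (genShift_overwrite_eq h w' s₀ t hw').symm
  simpa using congrArg S.restrict hpre

section Window

variable [Fintype A] [DecidableEq A]

def windowCylinder (T S : Finset Γ) (k : Γ) (g : Γ → A) : Finset (T → A) :=
  {u | ∀ j : T, ↑j + k ∈ S → u j = g (j + k)}

theorem restrict_mem_windowCylinder_iff {T : Finset Γ} {k : Γ} {g : Γ → A} {t : Γ → A}
    (hT : ∀ i ∈ S, i - k ∈ T) :
    T.restrict t ∈ windowCylinder T S k g ↔ t ∈ shiftedCylinder S k g := by
  simp only [windowCylinder, shiftedCylinder, mem_filter, mem_univ, true_and, Set.mem_ofPred_eq,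
    Finset.restrict, Subtype.forall]
  refine ⟨fun ht i hi => ?_, fun ht j _ hj => ?_⟩
  · simpa using ht (i - k) (hT i hi) (by simpa using hi)
  · simpa using ht _ hj

theorem card_windowCylinder_mul {T : Finset Γ} {k : Γ} (g : Γ → A)
    (hT : ∀ i ∈ S, i - k ∈ T) :
    #(windowCylinder T S k g) * Fintype.card A ^ #S = Fintype.card A ^ #T := by
  have hS : {j : T // ↑j + k ∈ S} ≃ S :=
    { toFun j := ⟨j + k, j.2⟩
      invFun i := ⟨⟨i - k, hT i i.2⟩, by simp⟩
      left_inv j := by ext; simp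
      right_inv i := by ext; simp }
  rw [← Fintype.card_coe S, ← Fintype.card_congr hS, ← Fintype.card_coe T]
  exact card_filter_forall_imp_eq_mul_pow _ _

end Window

theorem genShift_surjective [Finite A] (h : IsGenShiftData S F G)
    (hinj : Injective (genShift F G)) :
    Surjective (genShift F G) := by
  classical
  intro t
  have : Nonempty A := ⟨t 0⟩
  have := Fintype.ofFinite A
  set k : (S → A) → Γ := fun w => F (overwrite S w t)
  set g : (S → A) → Γ → A := fun w => G (overwrite S w t)
  set T : Finset Γ := univ.biUnion fun w => S.image (· - k w)
  have hT : ∀ w, ∀ i ∈ S, i - k w ∈ T := fun w i hi =>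
    mem_biUnion.2 ⟨w, mem_univ _, mem_image_of_mem _ hi⟩
  obtain ⟨w, hw⟩ : ∃ w, T.restrict t ∈ windowCylinder T S (k w) (g w) := by
    refine exists_mem_of_pairwise_disjoint_of_card_mul _ (fun w w' hne => ?_) (fun w => ?_) _
    · refine disjoint_left.2 fun u hu hu' => hne ?_
      rw [← restrict_overwrite T u t, restrict_mem_windowCylinder_iff (hT _)] at hu hu'
      exact eq_of_mem_shiftedCylinder h hinj hu hu'
    · simp only [Fintype.card_fun, Fintype.card_coe]
      exact card_windowCylinder_mul _ (hT w)
  exact ⟨_, genShift_overwrite_eq h w t t ((restrict_mem_windowCylinder_iff (hT w)).1 hw)⟩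

end GeneralizedShift

/-- (Moore's Lemma 2.) A generalized shift on `A^ℤ`, `A`
finite — i.e. a map `φ(s) = n ↦ G(s)(n + F(s))` where `F : A^ℤ → ℤ` and the
modification `G : A^ℤ → A^ℤ` depend only on the (finitely many) positions in
`S`, and `G` alters only the positions in `S` — is surjective whenever it is
injective; hence an injective generalized shift is bijective. -/
theorem stmt8 {A : Type*} [Finite A] (S : Finset ℤ)
    (F : (ℤ → A) → ℤ) (G : (ℤ → A) → (ℤ → A))
    (hF : ∀ s s', (∀ i ∈ S, s i = s' i) → F s = F s')
    (hG : ∀ s s', (∀ i ∈ S, s i = s' i) → ∀ i ∈ S, G s i = G s' i)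
    (hGoff : ∀ s, ∀ i ∉ S, G s i = s i)
    (φ : (ℤ → A) → (ℤ → A)) (hφ : ∀ s n, φ s n = G s (n + F s))
    (hinj : Function.Injective φ) :
    Function.Surjective φ ∧ Function.Bijective φ := by
  obtain rfl : φ = genShift F G := funext fun s => funext (hφ s)
  have hsurj := genShift_surjective ⟨hF, hG, hGoff⟩ hinj
  exact ⟨hsurj, hinj, hsurj⟩
end
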